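/- arXiv:1212.5503 — 4 statements merged into one kernel-verified Lean document; each statement's English description precedes it below -/
import Mathlib

section
/- Let C₁, …, C_m, C be nonempty finite subsets of a vector space E over an arbitrary field. Suppose there exist linearly independent vectors c₁ ∈ C₁, …, c_m ∈ C_m, and suppose the augmented family C₁, …, C_m, C is degenerate. Let V = span{c₁, …, c_m} and, for a fixed index i, let Vᵢ = span{c₁, …, c_{i−1}, c_{i+1}, …, c_m}. If Cᵢ is not contained in V, then the linear span L of C is contained in Vᵢ. -/
/-!
Every `x ∈ C` already lies in `V`: the family `c₁, …, c_m, x` is dependent while `c` is not.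
Replacing `cᵢ` by some `b ∈ Cᵢ \ V` keeps the family independent, so the same argument puts `x`
in the span of `b` and `Vᵢ`. Since `x ∈ V`, `Vᵢ ⊆ V` and `b ∉ V`, the exchange lemma forces `x ∈ Vᵢ`.
-/

open Submodule Set Function

theorem Set.range_update_subset_insert_image_compl {ι α : Type*} [DecidableEq ι]
    (v : ι → α) (i : ι) (b : α) : range (update v i b) ⊆ insert b (v '' {i}ᶜ) := by
  rintro _ ⟨j, rfl⟩
  rcases eq_or_ne j i with rfl | hj
  · simp
  · exact mem_insert_of_mem _ ⟨j, hj, (update_of_ne hj _ _).symm⟩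

section DivisionRing

variable {ι K V : Type*} [DivisionRing K] [AddCommGroup V] [Module K V]

theorem LinearIndepOn.linearIndependent_update [DecidableEq ι] {v : ι → V} {i : ι} {b : V}
    (hv : LinearIndepOn K v {i}ᶜ) (hb : b ∉ span K (v '' {i}ᶜ)) :
    LinearIndependent K (update v i b) := by
  have hagree : EqOn (update v i b) v {i}ᶜ := fun j hj => update_of_ne hj _ _
  rw [← linearIndepOn_univ_iff, show (univ : Set ι) = insert i {i}ᶜ by ext; simp [em]]
  refine (hv.congr hagree.symm).insert ?_
  rwa [update_self, image_congr hagree]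

theorem mem_span_of_mem_span_insert_of_notMem {W : Submodule K V} {s : Set V} {x y : V}
    (hx : x ∈ span K (insert y s)) (hxW : x ∈ W) (hsW : s ⊆ W) (hyW : y ∉ W) :
    x ∈ span K s := by
  by_contra hxs
  exact hyW (span_le.2 (insert_subset hxW hsW) (mem_span_insert_exchange hx hxs))

theorem mem_span_range_of_not_linearIndependent_snoc {n : ℕ} {v : Fin n → V} {x : V}
    (hv : LinearIndependent K v) (hvx : ¬ LinearIndependent K (Fin.snoc v x : Fin (n + 1) → V)) :
    x ∈ span K (range v) := by
  by_contra hx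
  exact hvx (linearIndependent_finSnoc.2 ⟨hv, hx⟩)

end DivisionRing

theorem stmt2_general {K E : Type*} [Field K] [AddCommGroup E] [Module K E]
    {m : ℕ} (C : Fin m → Finset E) (C' : Finset E)
    (c : Fin m → E) (hc : ∀ i, c i ∈ C i) (hindep : LinearIndependent K c)
    (hdeg : ∀ (d : Fin m → E), (∀ i, d i ∈ C i) → ∀ x ∈ C',
      ¬ LinearIndependent K (Fin.snoc d x : Fin (m + 1) → E))
    (i : Fin m)
    (hCi : ¬ ((C i : Set E) ⊆ (Submodule.span K (Set.range c) : Set E))) :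
    Submodule.span K (C' : Set E) ≤ Submodule.span K (c '' {j : Fin m | j ≠ i}) := by
  classical
  obtain ⟨b, hbC, hbV⟩ := not_subset.1 hCi
  have hspan (d : Fin m → E) (hd : ∀ j, d j ∈ C j) (hdi : LinearIndependent K d) :
      ∀ x ∈ C', x ∈ span K (range d) := fun x hx =>
    mem_span_range_of_not_linearIndependent_snoc hdi (hdeg d hd x hx)
  have hupdate_mem : ∀ j, update c i b j ∈ C j := forall_update_iff _ _ |>.2 ⟨hbC, fun j _ => hc j⟩
  have hupdate : LinearIndependent K (update c i b) :=
    (hindep.linearIndepOn _).linearIndependent_update fun h =>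
      hbV (span_mono (image_subset_range _ _) h)
  refine span_le.2 fun x hx => mem_span_of_mem_span_insert_of_notMem ?_ (hspan c hc hindep x hx)
    ((image_subset_range _ _).trans subset_span) hbV
  exact span_mono (range_update_subset_insert_image_compl c i b) (hspan _ hupdate_mem hupdate x hx)

/-- Lemma lmFin2: with `c₁ ∈ C₁, …, c_m ∈ C_m` linearly independent and
the augmented family `C₁, …, C_m, C` degenerate, set `V = span {c₁, …, c_m}` and
`Vᵢ = span {c₁, …, c_{i-1}, c_{i+1}, …, c_m}`. If `Cᵢ ⊄ V`, then the span of `C`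
is contained in `Vᵢ`. -/
theorem stmt2 {K E : Type*} [Field K] [AddCommGroup E] [Module K E]
    {m : ℕ} (C : Fin m → Finset E) (C' : Finset E)
    (hC : ∀ i, (C i).Nonempty) (hC' : C'.Nonempty)
    (c : Fin m → E) (hc : ∀ i, c i ∈ C i) (hindep : LinearIndependent K c)
    (hdeg : ∀ (d : Fin m → E), (∀ i, d i ∈ C i) → ∀ x ∈ C',
      ¬ LinearIndependent K (Fin.snoc d x : Fin (m + 1) → E))
    (i : Fin m)
    (hCi : ¬ ((C i : Set E) ⊆ (Submodule.span K (Set.range c) : Set E))) :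
    Submodule.span K (C' : Set E) ≤ Submodule.span K (c '' {j : Fin m | j ≠ i}) :=
  stmt2_general C C' c hc hindep hdeg i hCi
end

section
/- Let h : ℝ^N → ℝ be continuous, and suppose there exist finitely many closed convex sets P₁, …, P_q covering ℝ^N, vectors v₁, …, v_q ∈ ℝ^N, and constants b₁, …, b_q ∈ ℝ such that h(x) = ⟨vᵢ, x⟩ + bᵢ for all x ∈ Pᵢ. Let H be a linear subspace of ℝ^N such that vᵢ − vⱼ ∈ H for all i, j. Then the function x ↦ h(x) − ⟨v₁, x⟩ is constant along the orthogonal complement H^⊥, i.e., h(x + y) − ⟨v₁, x + y⟩ = h(x) − ⟨v₁, x⟩ for all x ∈ ℝ^N and all y ∈ H^⊥; equivalently, h − ⟨v₁, ·⟩ is the pullback of a function on ℝ^N/H^⊥ under the canonical projection. -/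
open scoped RealInnerProductSpace

/-!
Restrict `x ↦ h x - ⟪v₁, x⟫` to a line `t ↦ x + t • y` with `y ∈ Hᗮ`. On the trace of each `Pᵢ`
it equals `⟪vᵢ - v₁, x⟫ + bᵢ`, a constant because `vᵢ - v₁ ∈ H`. A function that is constant on
each member of a finite closed cover is locally constant, hence constant on the connected line.
-/

theorem isLocallyConstant_of_finite_closed_cover {X Y ι : Type*} [TopologicalSpace X] [Finite ι]
    (S : ι → Set X) (hclosed : ∀ i, IsClosed (S i)) (hcover : (⋃ i, S i) = Set.univ)
    (f : X → Y) (hconst : ∀ i, ∀ a ∈ S i, ∀ b ∈ S i, f a = f b) :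
    IsLocallyConstant f := by
  rw [IsLocallyConstant.iff_exists_open]
  intro a
  -- Near `a`, stay off the (closed, finite) union of the members missing `a`.
  refine ⟨(⋃ i ∈ {i | a ∉ S i}, S i)ᶜ, ?_, ?_, ?_⟩
  · exact (Set.toFinite _).isClosed_biUnion (fun i _ => hclosed i) |>.isOpen_compl
  · simp only [Set.mem_compl_iff, Set.mem_iUnion, not_exists]
    exact fun i hi hai => hi hai
  · intro b hb
    obtain ⟨i, hbi⟩ := Set.iUnion_eq_univ_iff.mp hcover b
    have hai : a ∈ S i := by_contra fun hai => hb (Set.mem_biUnion hai hbi)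
    exact hconst i b hbi a hai

theorem apply_add_eq_of_affine_on_closed_cover {E ι : Type*} [NormedAddCommGroup E]
    [InnerProductSpace ℝ E] [Finite ι] (P : ι → Set E) (hclosed : ∀ i, IsClosed (P i))
    (hcover : (⋃ i, P i) = Set.univ) (f : E → ℝ) (w : ι → E) (c : ι → ℝ)
    (haff : ∀ i, ∀ x ∈ P i, f x = ⟪w i, x⟫ + c i) (x y : E) (hy : ∀ i, ⟪w i, y⟫ = 0) :
    f (x + y) = f x := by
  set L : ℝ → E := fun t => x + t • y
  have hL : Continuous L := by fun_prop
  have hline : ∀ i, ∀ t ∈ L ⁻¹' P i, f (L t) = ⟪w i, x⟫ + c i := by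
    intro i t ht
    rw [haff i _ ht, inner_add_right, real_inner_smul_right, hy i, mul_zero, add_zero]
  have hloc : IsLocallyConstant (f ∘ L) :=
    isLocallyConstant_of_finite_closed_cover (fun i => L ⁻¹' P i)
      (fun i => (hclosed i).preimage hL) (by simp only [← Set.preimage_iUnion, hcover,
        Set.preimage_univ]) _
      (fun i s hs t ht => (hline i s hs).trans (hline i t ht).symm)
  simpa [L] using hloc.apply_eq_of_isPreconnected isPreconnected_univ
    (Set.mem_univ (1 : ℝ)) (Set.mem_univ (0 : ℝ))

theorem stmt14_general {N q : ℕ} (hq : 0 < q)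
    (h : EuclideanSpace ℝ (Fin N) → ℝ)
    (P : Fin q → Set (EuclideanSpace ℝ (Fin N)))
    (hclosed : ∀ i, IsClosed (P i))
    (hcover : (⋃ i, P i) = Set.univ)
    (v : Fin q → EuclideanSpace ℝ (Fin N)) (b : Fin q → ℝ)
    (haff : ∀ i, ∀ x ∈ P i, h x = ⟪v i, x⟫ + b i)
    (H : Submodule ℝ (EuclideanSpace ℝ (Fin N)))
    (hH : ∀ i j, v i - v j ∈ H) :
    ∀ x : EuclideanSpace ℝ (Fin N), ∀ y ∈ Hᗮ,
      h (x + y) - ⟪v ⟨0, hq⟩, x + y⟫ = h x - ⟪v ⟨0, hq⟩, x⟫ := by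
  intro x y hy
  set v₁ := v ⟨0, hq⟩
  have hreduced : ∀ i, ∀ z ∈ P i, h z - ⟪v₁, z⟫ = ⟪v i - v₁, z⟫ + b i := by
    intro i z hz
    rw [haff i z hz, inner_sub_left]
    ring
  exact apply_add_eq_of_affine_on_closed_cover P hclosed hcover (fun z => h z - ⟪v₁, z⟫)
    (fun i => v i - v₁) b hreduced x y
    (fun i => (Submodule.mem_orthogonal H y).mp hy _ (hH i _))

/-- Lemma lm1cell: let `h : ℝ^N → ℝ` be continuous and affine
(`h(x) = ⟨vᵢ, x⟩ + bᵢ`) on each member of a finite cover of `ℝ^N` by closed convex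
sets, and let `H` be a subspace with `vᵢ − vⱼ ∈ H` for all `i, j`. Then
`x ↦ h(x) − ⟨v₁, x⟩` is constant along the orthogonal complement `H^⊥`. -/
theorem stmt14 {N q : ℕ} (hq : 0 < q)
    (h : EuclideanSpace ℝ (Fin N) → ℝ) (hcont : Continuous h)
    (P : Fin q → Set (EuclideanSpace ℝ (Fin N)))
    (hclosed : ∀ i, IsClosed (P i)) (hconv : ∀ i, Convex ℝ (P i))
    (hcover : (⋃ i, P i) = Set.univ)
    (v : Fin q → EuclideanSpace ℝ (Fin N)) (b : Fin q → ℝ)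
    (haff : ∀ i, ∀ x ∈ P i, h x = ⟪v i, x⟫ + b i)
    (H : Submodule ℝ (EuclideanSpace ℝ (Fin N)))
    (hH : ∀ i j, v i - v j ∈ H) :
    ∀ x : EuclideanSpace ℝ (Fin N), ∀ y ∈ Hᗮ,
      h (x + y) - ⟪v ⟨0, hq⟩, x + y⟫ = h x - ⟪v ⟨0, hq⟩, x⟫ :=
  stmt14_general hq h P hclosed hcover v b haff H hH
end

section
/- Let h : ℝ^N → ℝ be continuous, and suppose there exist finitely many closed convex sets P₁, …, P_q covering ℝ^N on each of which h coincides with an affine function. Then there exist convex functions f, g : ℝ^N → ℝ, each of which is likewise continuous and coincides with an affine function on each member of some finite cover of ℝ^N by closed convex sets, such that h = f − g. -/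
/-- A continuous function `ℝ^N → ℝ` which coincides with an affine function on each
member of some finite cover of `ℝ^N` by closed convex sets (piecewise linearity). -/
def IsPiecewiseLinear {N : ℕ} (h : (Fin N → ℝ) → ℝ) : Prop :=
  Continuous h ∧
    ∃ (q : ℕ) (P : Fin q → Set (Fin N → ℝ)),
      (∀ i, IsClosed (P i)) ∧ (∀ i, Convex ℝ (P i)) ∧ (⋃ i, P i) = Set.univ ∧
      ∀ i, ∃ (l : (Fin N → ℝ) →ₗ[ℝ] ℝ) (b : ℝ), ∀ x ∈ P i, h x = l x + b

/-!
Let `aᵢ = lᵢ + bᵢ` be the affine functions of the pieces of `h`, put `g = ∑ᵢⱼ |aᵢ - aⱼ|` and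
`f = h + g`; `g` is visibly convex and piecewise linear. For `f`, fix `c` and a short vector `w`:
then `c + w` and `c - w` lie in pieces `i` and `j` containing `c`, so the second difference
`h (c + w) + h (c - w) - 2 h c` equals `d = lᵢ w - lⱼ w`, while the kink `|aᵢ - aⱼ|`, which vanishes
at `c`, has second difference `2 |d|`. Hence `f` satisfies a local midpoint inequality, and a
continuous function with that property is convex: on a segment, the largest point where `f` minus
its chord is maximal could otherwise be pushed further right.
-/

open Set Filter Topology

lemma le_max_of_eventually_two_mul_le {φ : ℝ → ℝ} {a b : ℝ} (hφ : ContinuousOn φ (Icc a b))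
    (hmid : ∀ t ∈ Ioo a b, ∀ᶠ ε in 𝓝[>] 0, 2 * φ t ≤ φ (t + ε) + φ (t - ε)) :
    ∀ t ∈ Icc a b, φ t ≤ max (φ a) (φ b) := by
  intro t ht
  by_contra! hlt
  obtain ⟨m, hm, hmax⟩ := isCompact_Icc.exists_isMaxOn ⟨t, ht⟩ hφ
  have hA : IsCompact (Icc a b ∩ φ ⁻¹' {φ m}) :=
    isCompact_Icc.of_isClosed_subset
      (hφ.preimage_isClosed_of_isClosed isClosed_Icc isClosed_singleton) inter_subset_left
  obtain ⟨s, ⟨hs, hsm : φ s = φ m⟩, hgreatest⟩ := hA.exists_isGreatest ⟨m, hm, rfl⟩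
  have hts : φ t ≤ φ s := hsm ▸ hmax ht
  have has : a < s :=
    hs.1.lt_of_ne (by rintro rfl; exact (le_max_left _ _).not_gt (hlt.trans_le hts))
  have hsb : s < b :=
    hs.2.lt_of_ne (by rintro rfl; exact (le_max_right _ _).not_gt (hlt.trans_le hts))
  obtain ⟨ε, hε, hε0, hεδ⟩ := (Eventually.and (hmid s ⟨has, hsb⟩)
    (Ioo_mem_nhdsGT (lt_min (sub_pos.2 has) (sub_pos.2 hsb)))).exists
  have hεs : ε < s - a := hεδ.trans_le (min_le_left _ _)
  have hεb : ε < b - s := hεδ.trans_le (min_le_right _ _)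
  have hplus : φ (s + ε) ≤ φ m := hmax ⟨by linarith, by linarith⟩
  have hminus : φ (s - ε) ≤ φ m := hmax ⟨by linarith, by linarith⟩
  have : s + ε ≤ s := hgreatest ⟨⟨by linarith, by linarith⟩, by
    simp only [mem_preimage, mem_singleton_iff]; linarith⟩
  linarith

lemma convexOn_univ_of_eventually_two_mul_le {E : Type*} [AddCommGroup E] [Module ℝ E]
    [TopologicalSpace E] [ContinuousAdd E] [ContinuousSMul ℝ E] {f : E → ℝ} (hf : Continuous f)
    (hmid : ∀ c v : E, ∀ᶠ ε in 𝓝[>] (0 : ℝ), 2 * f c ≤ f (c + ε • v) + f (c - ε • v)) :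
    ConvexOn ℝ univ f := by
  refine ⟨convex_univ, fun x _ y _ s t hs ht hst => ?_⟩
  obtain rfl : s = 1 - t := by linarith
  set φ : ℝ → ℝ := fun r => f (x + r • (y - x)) - ((1 - r) * f x + r * f y)
  have hφ : Continuous φ := by fun_prop
  have hφmid : ∀ r ∈ Ioo (0 : ℝ) 1, ∀ᶠ ε in 𝓝[>] 0, 2 * φ r ≤ φ (r + ε) + φ (r - ε) := by
    intro r _
    filter_upwards [hmid (x + r • (y - x)) (y - x)] with ε hε
    have hplus : x + r • (y - x) + ε • (y - x) = x + (r + ε) • (y - x) := by module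
    have hminus : x + r • (y - x) - ε • (y - x) = x + (r - ε) • (y - x) := by module
    simp only [φ]
    rw [hplus, hminus] at hε
    linarith
  have hφ0 : φ 0 = 0 := by simp [φ]
  have hφ1 : φ 1 = 0 := by simp [φ]
  have hφt := le_max_of_eventually_two_mul_le hφ.continuousOn hφmid t ⟨ht, by linarith⟩
  have hpoint : x + t • (y - x) = (1 - t) • x + t • y := by module
  rw [hφ0, hφ1, max_self] at hφt
  simp only [φ, hpoint] at hφt
  rw [smul_eq_mul, smul_eq_mul]
  linarith

lemma ConvexOn.two_mul_le_add {E : Type*} [AddCommGroup E] [Module ℝ E] {f : E → ℝ}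
    (hf : ConvexOn ℝ univ f) (c w : E) : 2 * f c ≤ f (c + w) + f (c - w) := by
  have h := hf.2 (mem_univ (c + w)) (mem_univ (c - w)) (by norm_num : (0 : ℝ) ≤ 1 / 2)
    (by norm_num : (0 : ℝ) ≤ 1 / 2) (by norm_num)
  have hc : (1 / 2 : ℝ) • (c + w) + (1 / 2 : ℝ) • (c - w) = c := by module
  rw [hc, smul_eq_mul, smul_eq_mul] at h
  linarith

lemma eventually_exists_mem_and_mem {X ι : Type*} [TopologicalSpace X] [Finite ι]
    {P : ι → Set X} (hP : ∀ i, IsClosed (P i)) (hcov : ⋃ i, P i = univ) (z : X) :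
    ∀ᶠ w in 𝓝 z, ∃ i, z ∈ P i ∧ w ∈ P i := by
  have hnear : ∀ᶠ w in 𝓝 z, ∀ i, w ∈ P i → z ∈ P i := by
    refine eventually_all.2 fun i => ?_
    by_cases hz : z ∈ P i
    · exact Eventually.of_forall fun _ _ => hz
    · filter_upwards [(hP i).isOpen_compl.mem_nhds hz] with w hw hwi using absurd hwi hw
  filter_upwards [hnear] with w hw
  obtain ⟨i, hi⟩ := mem_iUnion.1 (hcov ▸ mem_univ w)
  exact ⟨i, hw i hi, hi⟩

section PairwiseAbsDiff

variable {E ι : Type*} [AddCommGroup E] [Module ℝ E] [Fintype ι]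

def pairwiseAbsDiff (l : ι → E →ₗ[ℝ] ℝ) (b : ι → ℝ) (x : E) : ℝ :=
  ∑ p : ι × ι, |(l p.1 - l p.2) x + (b p.1 - b p.2)|

lemma convexOn_abs_linearMap_add_const (L : E →ₗ[ℝ] ℝ) (B : ℝ) :
    ConvexOn ℝ univ fun x => |L x + B| := by
  refine ⟨convex_univ, fun x _ y _ s t hs ht hst => ?_⟩
  have hsplit : L (s • x + t • y) + B = s * (L x + B) + t * (L y + B) := by
    rw [map_add, map_smul, map_smul, smul_eq_mul, smul_eq_mul]
    linear_combination (-B) * hst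
  calc |L (s • x + t • y) + B| = |s * (L x + B) + t * (L y + B)| := by rw [hsplit]
    _ ≤ |s * (L x + B)| + |t * (L y + B)| := abs_add_le _ _
    _ = s • |L x + B| + t • |L y + B| := by
      rw [abs_mul, abs_mul, abs_of_nonneg hs, abs_of_nonneg ht, smul_eq_mul, smul_eq_mul]

lemma convexOn_pairwiseAbsDiff (l : ι → E →ₗ[ℝ] ℝ) (b : ι → ℝ) :
    ConvexOn ℝ univ (pairwiseAbsDiff l b) := by
  refine ⟨convex_univ, fun x _ y _ s t hs ht hst => ?_⟩
  simp only [pairwiseAbsDiff, smul_eq_mul, Finset.mul_sum, ← Finset.sum_add_distrib]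
  exact Finset.sum_le_sum fun p _ =>
    (convexOn_abs_linearMap_add_const _ _).2 trivial trivial hs ht hst

lemma two_mul_add_pairwiseAbsDiff_le {h : E → ℝ} {l : ι → E →ₗ[ℝ] ℝ} {b : ι → ℝ} {c w : E}
    {i j : ι} (hci : h c = l i c + b i) (hwi : h (c + w) = l i (c + w) + b i)
    (hcj : h c = l j c + b j) (hwj : h (c - w) = l j (c - w) + b j) :
    2 * (h + pairwiseAbsDiff l b) c ≤
      (h + pairwiseAbsDiff l b) (c + w) + (h + pairwiseAbsDiff l b) (c - w) := by
  set T : ι × ι → E → ℝ := fun p x => |(l p.1 - l p.2) x + (b p.1 - b p.2)|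
  set gap : ι × ι → ℝ := fun p => T p (c + w) + T p (c - w) - 2 * T p c
  have hgap : ∀ p, 0 ≤ gap p := fun p => by
    have := (convexOn_abs_linearMap_add_const (l p.1 - l p.2) (b p.1 - b p.2)).two_mul_le_add c w
    linarith
  have hsum : pairwiseAbsDiff l b (c + w) + pairwiseAbsDiff l b (c - w)
      - 2 * pairwiseAbsDiff l b c = ∑ p, gap p := by
    simp only [gap, T, pairwiseAbsDiff, Finset.sum_sub_distrib, Finset.sum_add_distrib,
      Finset.mul_sum]
  set d := l i w - l j w
  have hh : h (c + w) + h (c - w) = 2 * h c + d := by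
    rw [hwi, hwj, map_add, map_sub]
    linarith
  have hkink : (l i - l j) c + (b i - b j) = 0 := by
    rw [LinearMap.sub_apply]
    linarith
  have hTc : T (i, j) c = 0 := by simp only [T, hkink, abs_zero]
  have hTminus : -d ≤ T (i, j) (c - w) := by
    have : (l i - l j) (c - w) + (b i - b j) = -d := by
      rw [map_sub, LinearMap.sub_apply (l i) (l j) w]
      linarith
    simpa only [T, this] using le_abs_self (-d)
  have hTplus : 0 ≤ T (i, j) (c + w) := abs_nonneg _
  have hgap_ij : gap (i, j) ≤ ∑ p, gap p :=
    Finset.single_le_sum (fun p _ => hgap p) (Finset.mem_univ (i, j))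
  simp only [Pi.add_apply, gap] at hgap_ij ⊢
  linarith

end PairwiseAbsDiff

lemma convexOn_add_pairwiseAbsDiff {E ι : Type*} [AddCommGroup E] [Module ℝ E]
    [TopologicalSpace E] [IsTopologicalAddGroup E] [ContinuousSMul ℝ E] [Fintype ι]
    {P : ι → Set E} (hP : ∀ i, IsClosed (P i)) (hcov : ⋃ i, P i = univ) {h : E → ℝ}
    {l : ι → E →ₗ[ℝ] ℝ} {b : ι → ℝ} (hh : ∀ i, ∀ x ∈ P i, h x = l i x + b i)
    (hcont : Continuous (h + pairwiseAbsDiff l b)) :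
    ConvexOn ℝ univ (h + pairwiseAbsDiff l b) := by
  refine convexOn_univ_of_eventually_two_mul_le hcont fun c v => ?_
  have hline : ∀ u : E, ∀ᶠ ε in 𝓝[>] (0 : ℝ), ∃ i, c ∈ P i ∧ c + ε • u ∈ P i := fun u =>
    tendsto_nhdsWithin_of_tendsto_nhds
      ((by fun_prop : Continuous fun ε : ℝ => c + ε • u).tendsto' _ _ (by simp))
      |>.eventually (eventually_exists_mem_and_mem hP hcov c)
  filter_upwards [hline v, hline (-v)] with ε ⟨i, hci, hi⟩ ⟨j, hcj, hj⟩
  rw [smul_neg, ← sub_eq_add_neg] at hj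
  exact two_mul_add_pairwiseAbsDiff_le (hh i c hci) (hh i _ hi) (hh j c hcj) (hh j _ hj)

section PiecewiseLinear

variable {N : ℕ}

lemma IsPiecewiseLinear.of_cover {ι : Type*} [Finite ι] {h : (Fin N → ℝ) → ℝ}
    (hc : Continuous h) (P : ι → Set (Fin N → ℝ)) (hPc : ∀ i, IsClosed (P i))
    (hPv : ∀ i, Convex ℝ (P i)) (hcov : ⋃ i, P i = univ)
    (haff : ∀ i, ∃ (l : (Fin N → ℝ) →ₗ[ℝ] ℝ) (b : ℝ), ∀ x ∈ P i, h x = l x + b) :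
    IsPiecewiseLinear h := by
  obtain ⟨n, ⟨e⟩⟩ := Finite.exists_equiv_fin ι
  exact ⟨hc, n, P ∘ e.symm, fun _ => hPc _, fun _ => hPv _,
    (e.symm.surjective.iUnion_comp P).trans hcov, fun _ => haff _⟩

lemma isPiecewiseLinear_affine (l : (Fin N → ℝ) →ₗ[ℝ] ℝ) (b : ℝ) :
    IsPiecewiseLinear fun x => l x + b :=
  ⟨(LinearMap.continuous_of_finiteDimensional l).add continuous_const, 1, fun _ => univ,
    fun _ => isClosed_univ, fun _ => convex_univ, iUnion_const univ,
    fun _ => ⟨l, b, fun _ _ => rfl⟩⟩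

lemma IsPiecewiseLinear.add {f g : (Fin N → ℝ) → ℝ} (hf : IsPiecewiseLinear f)
    (hg : IsPiecewiseLinear g) : IsPiecewiseLinear (f + g) := by
  obtain ⟨hfc, q, P, hPc, hPv, hPcov, hPaff⟩ := hf
  obtain ⟨hgc, r, Q, hQc, hQv, hQcov, hQaff⟩ := hg
  refine .of_cover (hfc.add hgc) (fun k : Fin q × Fin r => P k.1 ∩ Q k.2)
    (fun _ => (hPc _).inter (hQc _)) (fun _ => (hPv _).inter (hQv _)) ?_ ?_
  · refine eq_univ_of_forall fun x => ?_
    obtain ⟨i, hi⟩ := mem_iUnion.1 (hPcov ▸ mem_univ x)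
    obtain ⟨j, hj⟩ := mem_iUnion.1 (hQcov ▸ mem_univ x)
    exact mem_iUnion.2 ⟨(i, j), hi, hj⟩
  · rintro ⟨i, j⟩
    obtain ⟨l, b, hlb⟩ := hPaff i
    obtain ⟨m, c, hmc⟩ := hQaff j
    refine ⟨l + m, b + c, fun x ⟨hxi, hxj⟩ => ?_⟩
    rw [Pi.add_apply, hlb x hxi, hmc x hxj, LinearMap.add_apply]
    ring

lemma IsPiecewiseLinear.sum {ι : Type*} (s : Finset ι) {f : ι → (Fin N → ℝ) → ℝ}
    (hf : ∀ i ∈ s, IsPiecewiseLinear (f i)) : IsPiecewiseLinear fun x => ∑ i ∈ s, f i x := by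
  classical
  induction s using Finset.induction_on with
  | empty => simpa using isPiecewiseLinear_affine 0 0
  | insert a s ha ih =>
    simp only [Finset.sum_insert ha]
    exact (hf a (Finset.mem_insert_self a s)).add
      (ih fun i hi => hf i (Finset.mem_insert_of_mem hi))

lemma IsPiecewiseLinear.abs {h : (Fin N → ℝ) → ℝ} (hh : IsPiecewiseLinear h) :
    IsPiecewiseLinear fun x => |h x| := by
  obtain ⟨hc, q, P, hPc, hPv, hPcov, hPaff⟩ := hh
  choose l b hlb using hPaff
  let sgn : Bool → ℝ := fun σ => if σ then 1 else -1
  have hsgn : ∀ σ, |sgn σ| = 1 := by intro σ; cases σ <;> simp [sgn]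
  refine .of_cover hc.abs (fun k : Fin q × Bool => P k.1 ∩ {x | 0 ≤ sgn k.2 * h x})
    (fun _ => (hPc _).inter (isClosed_le continuous_const (continuous_const.mul hc)))
    (fun k => ?_) ?_ (fun k => ⟨sgn k.2 • l k.1, sgn k.2 * b k.1, fun x ⟨hxP, hxs⟩ => ?_⟩)
  · have hhalf : P k.1 ∩ {x | 0 ≤ sgn k.2 * h x} =
        P k.1 ∩ {x | -(sgn k.2 * b k.1) ≤ (sgn k.2 • l k.1) x} := by
      ext x
      constructor <;> rintro ⟨hx, hs⟩ <;> refine ⟨hx, ?_⟩ <;>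
        simp only [mem_ofPred_eq, LinearMap.smul_apply, smul_eq_mul, hlb _ x hx, mul_add]
          at hs ⊢ <;>
        linarith
    rw [hhalf]
    exact (hPv _).inter (convex_halfSpace_ge (LinearMap.isLinear _) _)
  · refine eq_univ_of_forall fun x => ?_
    obtain ⟨i, hi⟩ := mem_iUnion.1 (hPcov ▸ mem_univ x)
    refine mem_iUnion.2 ⟨(i, decide (0 ≤ h x)), hi, ?_⟩
    by_cases hx : 0 ≤ h x
    · simp [sgn, hx]
    · simp only [sgn, hx, decide_false, Bool.false_eq_true, ↓reduceIte, mem_ofPred_eq]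
      linarith
  · calc |h x| = |sgn k.2 * h x| := by rw [abs_mul, hsgn, one_mul]
      _ = sgn k.2 * h x := abs_of_nonneg hxs
      _ = (sgn k.2 • l k.1) x + sgn k.2 * b k.1 := by
        rw [hlb _ x hxP, LinearMap.smul_apply, smul_eq_mul, mul_add]

lemma isPiecewiseLinear_pairwiseAbsDiff {ι : Type*} [Fintype ι]
    (l : ι → (Fin N → ℝ) →ₗ[ℝ] ℝ) (b : ι → ℝ) : IsPiecewiseLinear (pairwiseAbsDiff l b) :=
  IsPiecewiseLinear.sum _ fun _ _ => (isPiecewiseLinear_affine _ _).abs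

end PiecewiseLinear

/-- every piecewise linear function `h : ℝ^N → ℝ` is the difference
`h = f − g` of two convex piecewise linear functions. -/
theorem stmt15 {N : ℕ} (h : (Fin N → ℝ) → ℝ) (hpl : IsPiecewiseLinear h) :
    ∃ f g : (Fin N → ℝ) → ℝ,
      ConvexOn ℝ Set.univ f ∧ ConvexOn ℝ Set.univ g ∧
      IsPiecewiseLinear f ∧ IsPiecewiseLinear g ∧ h = f - g := by
  obtain ⟨q, P, hPc, -, hPcov, hPaff⟩ := hpl.2
  choose l b hlb using hPaff
  have hgPL := isPiecewiseLinear_pairwiseAbsDiff l b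
  have hfPL := hpl.add hgPL
  exact ⟨h + pairwiseAbsDiff l b, pairwiseAbsDiff l b,
    convexOn_add_pairwiseAbsDiff hPc hPcov hlb hfPL.1, convexOn_pairwiseAbsDiff l b,
    hfPL, hgPL, (add_sub_cancel_right h _).symm⟩
end

section
/- Let γ be the convex hull of a finite subset of N-dimensional Euclidean space and let δ be a nonempty exposed face of γ whose affine span has dimension m. Let Δ = {z ∈ ℝ^N : ∀ x ∈ δ, ∀ y ∈ γ, ⟨y, z⟩ ≤ ⟨x, z⟩} be the dual (normal) cone of the face δ. Then the linear span of Δ has dimension N − m. -/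
/-!
Every normal vector of the face `δ` is constant on `δ`, so the normal cone lies in the
orthogonal complement of the direction of `δ`. Conversely, let `u` expose `δ` and let `w` be
orthogonal to `δ`. Then `u + ε • w` is still constant on `δ`, and since `u` separates each of the
finitely many vertices off `δ` strictly from `δ`, for small `ε` it still attains its maximum over
the polytope on `δ`. So `w` is a combination of two normal vectors, the span of the normal cone
is the orthogonal complement, and its dimension is `N - m`.
-/

open scoped RealInnerProductSpace

open Filter Topology Module

variable {E : Type*} [NormedAddCommGroup E] [InnerProductSpace ℝ E]

def normalCone (γ δ : Set E) : Set E := {z | ∀ x ∈ δ, ∀ y ∈ γ, ⟪y, z⟫ ≤ ⟪x, z⟫}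

theorem mem_orthogonal_direction_affineSpan_iff {s : Set E} {z : E} :
    z ∈ (affineSpan ℝ s).directionᗮ ↔ ∀ x ∈ s, ∀ y ∈ s, ⟪x, z⟫ = ⟪y, z⟫ := by
  rw [direction_affineSpan, vectorSpan_def, Submodule.mem_orthogonal]
  constructor
  · intro h x hx y hy
    have hxy := h (x - y) (Submodule.subset_span (Set.vsub_mem_vsub hx hy))
    rwa [inner_sub_left, sub_eq_zero] at hxy
  · intro h u hu
    induction hu using Submodule.span_induction with
    | mem _ hv =>
      obtain ⟨x, hx, y, hy, rfl⟩ := hv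
      change ⟪x - y, z⟫ = 0
      rw [inner_sub_left, h x hx y hy, sub_self]
    | zero => exact inner_zero_left _
    | add _ _ _ _ h₁ h₂ => rw [inner_add_left, h₁, h₂, add_zero]
    | smul c _ _ h => rw [real_inner_smul_left, h, mul_zero]

theorem normalCone_subset_orthogonal_direction {γ δ : Set E} (hδγ : δ ⊆ γ) :
    normalCone γ δ ⊆ (affineSpan ℝ δ).directionᗮ := fun _ hz =>
  mem_orthogonal_direction_affineSpan_iff.2 fun x hx y hy =>
    le_antisymm (hz y hy x (hδγ hx)) (hz x hx y (hδγ hy))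

theorem mem_normalCone_convexHull_iff {A δ : Set E} {z : E} :
    z ∈ normalCone (convexHull ℝ A) δ ↔ ∀ x ∈ δ, ∀ v ∈ A, ⟪v, z⟫ ≤ ⟪x, z⟫ := by
  refine ⟨fun h x hx v hv => h x hx v (subset_convexHull ℝ A hv), fun h x hx y hy => ?_⟩
  have hhalf : Convex ℝ {y : E | ⟪y, z⟫ ≤ ⟪x, z⟫} :=
    convex_halfSpace_le ⟨fun a b => inner_add_left a b z, fun c a => real_inner_smul_left a z c⟩ _
  exact convexHull_min (h x hx) hhalf hy

theorem IsExposed.exists_eq_setOf_inner_le [CompleteSpace E] {γ δ : Set E}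
    (h : IsExposed ℝ γ δ) (hδ : δ.Nonempty) :
    ∃ u : E, δ = {x ∈ γ | ∀ y ∈ γ, ⟪y, u⟫ ≤ ⟪x, u⟫} := by
  obtain ⟨l, rfl⟩ := h hδ
  refine ⟨(InnerProductSpace.toDual ℝ E).symm l, ?_⟩
  simp only [real_inner_comm ((InnerProductSpace.toDual ℝ E).symm l),
    InnerProductSpace.toDual_symm_apply]

theorem eventually_add_smul_mem_normalCone_convexHull {A : Finset E} {δ : Set E} {u w : E}
    (hδ : δ.Nonempty) (hu : δ = {x ∈ convexHull ℝ A | ∀ y ∈ convexHull ℝ A, ⟪y, u⟫ ≤ ⟪x, u⟫})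
    (hw : w ∈ (affineSpan ℝ δ).directionᗮ) :
    ∀ᶠ ε : ℝ in 𝓝 0, u + ε • w ∈ normalCone (convexHull ℝ A) δ := by
  obtain ⟨x₀, hx₀⟩ := hδ
  have hδγ : δ ⊆ convexHull ℝ A := hu ▸ Set.sep_subset _ _
  have hu_normal : u ∈ normalCone (convexHull ℝ A) δ := fun x hx => by
    rw [hu] at hx
    exact hx.2
  have hconst (ε : ℝ) : ∀ x ∈ δ, ⟪x, u + ε • w⟫ = ⟪x₀, u + ε • w⟫ := fun x hx =>
    mem_orthogonal_direction_affineSpan_iff.1 (Submodule.add_mem _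
      (normalCone_subset_orthogonal_direction hδγ hu_normal) (Submodule.smul_mem _ ε hw))
      x hx x₀ hx₀
  have hgap : ∀ v ∈ A, v ∉ δ → ⟪v, u⟫ < ⟪x₀, u⟫ := fun v hv hvδ => by
    by_contra! hle
    rw [hu] at hvδ
    exact hvδ ⟨subset_convexHull ℝ _ hv, fun y hy => (hu_normal x₀ hx₀ y hy).trans hle⟩
  have hev : ∀ᶠ ε : ℝ in 𝓝 0, ∀ v ∈ A, v ∉ δ → ⟪v, u + ε • w⟫ < ⟪x₀, u + ε • w⟫ := by
    refine (Filter.eventually_all_finset A).2 fun v hv => ?_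
    by_cases hvδ : v ∈ δ
    · exact Eventually.of_forall fun _ h => absurd hvδ h
    · have hlt : ∀ᶠ ε : ℝ in 𝓝 0, ⟪v, u + ε • w⟫ < ⟪x₀, u + ε • w⟫ :=
        ContinuousAt.eventually_lt (by fun_prop) (by fun_prop) (by simpa using hgap v hv hvδ)
      exact hlt.mono fun _ h _ => h
  filter_upwards [hev] with ε hε
  refine mem_normalCone_convexHull_iff.2 fun x hx v hv => ?_
  rw [hconst ε x hx]
  by_cases hvδ : v ∈ δ
  · rw [hconst ε v hvδ]
  · exact (hε v hv hvδ).le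

theorem orthogonal_direction_le_span_normalCone_convexHull [CompleteSpace E] {A : Finset E}
    {δ : Set E} (hδ : δ.Nonempty) (hexp : IsExposed ℝ (convexHull ℝ A) δ) :
    (affineSpan ℝ δ).directionᗮ ≤ Submodule.span ℝ (normalCone (convexHull ℝ A) δ) := by
  intro w hw
  obtain ⟨u, hu⟩ := hexp.exists_eq_setOf_inner_le hδ
  have hev := eventually_add_smul_mem_normalCone_convexHull hδ hu hw
  obtain ⟨ε, hε, hε0⟩ :=
    ((hev.filter_mono nhdsWithin_le_nhds).and (self_mem_nhdsWithin (s := {0}ᶜ))).exists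
  have hu_mem : u ∈ normalCone (convexHull ℝ A) δ := by simpa using hev.self_of_nhds
  have hεw : ε • w ∈ Submodule.span ℝ (normalCone (convexHull ℝ A) δ) := by
    simpa using Submodule.sub_mem _ (Submodule.subset_span hε) (Submodule.subset_span hu_mem)
  simpa [smul_smul, inv_mul_cancel₀ hε0] using Submodule.smul_mem _ ε⁻¹ hεw

theorem span_normalCone_convexHull_eq [CompleteSpace E] {A : Finset E} {δ : Set E}
    (hδ : δ.Nonempty) (hexp : IsExposed ℝ (convexHull ℝ A) δ) :
    Submodule.span ℝ (normalCone (convexHull ℝ A) δ) = (affineSpan ℝ δ).directionᗮ :=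
  le_antisymm (Submodule.span_le.2 (normalCone_subset_orthogonal_direction hexp.subset))
    (orthogonal_direction_le_span_normalCone_convexHull hδ hexp)

theorem finrank_span_normalCone_convexHull [FiniteDimensional ℝ E] {A : Finset E} {δ : Set E}
    (hδ : δ.Nonempty) (hexp : IsExposed ℝ (convexHull ℝ A) δ) :
    finrank ℝ (Submodule.span ℝ (normalCone (convexHull ℝ A) δ)) =
      finrank ℝ E - finrank ℝ (affineSpan ℝ δ).direction := by
  have := (affineSpan ℝ δ).direction.finrank_add_finrank_orthogonal
  rw [span_normalCone_convexHull_eq hδ hexp]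
  omega

/-- let `γ = conv(finite set) ⊆ ℝ^N`, let `δ` be a nonempty exposed face
of `γ` whose affine span has dimension `m`, and let
`Δ = {z : ∀ x ∈ δ, ∀ y ∈ γ, ⟨y, z⟩ ≤ ⟨x, z⟩}` be the dual (normal) cone of `δ`.
Then the linear span of `Δ` has dimension `N − m`. -/
theorem stmt16 {N m : ℕ} (A : Finset (EuclideanSpace ℝ (Fin N)))
    (γ : Set (EuclideanSpace ℝ (Fin N))) (hγ : γ = convexHull ℝ (A : Set _))
    (δ : Set (EuclideanSpace ℝ (Fin N))) (hδne : δ.Nonempty)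
    (hexp : IsExposed ℝ γ δ)
    (hm : Module.finrank ℝ (affineSpan ℝ δ).direction = m)
    (Δ : Set (EuclideanSpace ℝ (Fin N)))
    (hΔ : Δ = {z | ∀ x ∈ δ, ∀ y ∈ γ, ⟪y, z⟫ ≤ ⟪x, z⟫}) :
    Module.finrank ℝ (Submodule.span ℝ Δ) = N - m := by
  subst hγ hΔ hm
  have h := finrank_span_normalCone_convexHull hδne hexp
  rwa [finrank_euclideanSpace_fin] at h
end
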